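/- arXiv:1904.09231 — 4 statements merged into one kernel-verified Lean document; each statement's English description precedes it below -/
import Mathlib

section
/- Fix a sequence s and a window size ρ, and fix either the fixed-window or the disjoint-window frequency measure. Every f-closed strict, transitively closed episode is i-closed: if G ∈ 𝒮 is f-closed, then icl(G) = G. -/
open scoped Classical

/-- An episode: a finite directed acyclic graph with nodes drawn from `ℕ`,
labelled by symbols of an alphabet `α`. -/
structure Episode (α : Type*) where
  nodes : Finset ℕ
  edge : ℕ → ℕ → Prop
  lab : ℕ → α
  edge_mem : ∀ ⦃x y : ℕ⦄, edge x y → x ∈ nodes ∧ y ∈ nodes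

namespace Episode

variable {α : Type*}

/-- Transitively closed: whenever there is a directed path from `u` to `v`,
`(u,v)` is an edge. -/
def TransClosed (G : Episode α) : Prop :=
  ∀ ⦃u v : ℕ⦄, Relation.TransGen G.edge u v → G.edge u v

/-- Acyclic: no directed cycles. -/
def Acyclic (G : Episode α) : Prop := ∀ v : ℕ, ¬ Relation.TransGen G.edge v v

/-- Strict: any two distinct nodes sharing the same label are joined by a
directed path. -/
def Strict (G : Episode α) : Prop :=
  ∀ u ∈ G.nodes, ∀ v ∈ G.nodes, u ≠ v → G.lab u = G.lab v →
    Relation.TransGen G.edge u v ∨ Relation.TransGen G.edge v u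

/-- The class `𝒮` of strict, transitively closed (acyclic) episodes. -/
def inS (G : Episode α) : Prop := G.Acyclic ∧ G.TransClosed ∧ G.Strict

/-- A sequence `s` covers an episode `G`: there is an injective map from the
nodes of `G` to indices of `s` matching labels and respecting edges. -/
def Covers (s : List α) (G : Episode α) : Prop :=
  ∃ f : {v // v ∈ G.nodes} → Fin s.length,
    Function.Injective f ∧ (∀ v, s.get (f v) = G.lab v.1) ∧
      ∀ u v, G.edge u.1 v.1 → f u < f v

/-- `f` witnesses that `s` is an instance of `G`: a bijective valid mapping. -/
def IsInstanceMap (s : List α) (G : Episode α)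
    (f : {v // v ∈ G.nodes} → Fin s.length) : Prop :=
  Function.Bijective f ∧ (∀ v, s.get (f v) = G.lab v.1) ∧
    ∀ u v, G.edge u.1 v.1 → f u < f v

/-- The subgraph of `H` induced on a set `U` of nodes. -/
def restrict (H : Episode α) (U : Finset ℕ) : Episode α where
  nodes := U
  edge := fun x y => x ∈ U ∧ y ∈ U ∧ H.edge x y
  lab := H.lab
  edge_mem := by rintro x y ⟨h1, h2, -⟩; exact ⟨h1, h2⟩

/-- `G ⪯ H`: `G` is a subepisode of `H`.  There is a subgraph of `H` with as
many nodes as `G` such that every sequence covering that subgraph covers `G`. -/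
def Subep (G H : Episode α) : Prop :=
  ∃ U : Finset ℕ, U ⊆ H.nodes ∧ U.card = G.nodes.card ∧
    ∀ s : List α, Covers s (H.restrict U) → Covers s G

/-- `G ≺ H`: proper subepisode. -/
def ProperSubep (G H : Episode α) : Prop := Subep G H ∧ ¬ Subep H G

/-- `G ∼ H`: every sequence covers `G` iff it covers `H`. -/
def Equivalent (G H : Episode α) : Prop := ∀ s : List α, Covers s G ↔ Covers s H

/-- The nodes of `G` are `0, …, card − 1` listed in the canonical order:
labels increase, and nodes with equal labels are ordered by the edges. -/
def CanonicallyIndexed [LinearOrder α] (G : Episode α) : Prop :=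
  G.nodes = Finset.range G.nodes.card ∧
    ∀ u ∈ G.nodes, ∀ v ∈ G.nodes, u < v →
      G.lab u < G.lab v ∨ (G.lab u = G.lab v ∧ G.edge u v)

/-- An occurrence (instance) of `G` inside `s` whose span is smaller than the
window size `ρ`: an injective valid mapping with `max f − min f < ρ`. -/
def IsOcc (s : List α) (ρ : ℕ) (G : Episode α)
    (f : {v // v ∈ G.nodes} → Fin s.length) : Prop :=
  Function.Injective f ∧ (∀ v, s.get (f v) = G.lab v.1) ∧
    (∀ u v, G.edge u.1 v.1 → f u < f v) ∧
    ∀ u v, (f u : ℕ) < (f v : ℕ) + ρ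

/-- `G` occurs in `s` within some window of length at most `ρ`. -/
def Occurs (s : List α) (ρ : ℕ) (G : Episode α) : Prop := ∃ f, IsOcc s ρ G f

/-- The symbol `x` occurs in `s` inside the interval `[min f, max f]` of an
occurrence `f`. -/
def SymInWindow (s : List α) {G : Episode α}
    (f : {v // v ∈ G.nodes} → Fin s.length) (x : α) : Prop :=
  ∃ i : Fin s.length, s.get i = x ∧ (∃ u, f u ≤ i) ∧ ∃ v, i ≤ f v

/-- The node closure `cl_N`: augment `G` with one new isolated node labelled
`x` for each symbol `x` of `s`, not labelling a node of `G`, that occurs inside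
the interval of every occurrence of `G` (with span `< ρ`). -/
noncomputable def clN [LinearOrder α] (s : List α) (ρ : ℕ) (G : Episode α) :
    Episode α :=
  let newLabs : List α := (s.toFinset.filter
      (fun x => (∀ f, IsOcc s ρ G f → SymInWindow s f x) ∧
        ∀ v ∈ G.nodes, G.lab v ≠ x)).sort (· ≤ ·)
  let base : ℕ := G.nodes.sup id + 1
  { nodes := G.nodes ∪ (Finset.range newLabs.length).image (fun i => base + i)
    edge := G.edge
    lab := fun v =>
      if h : base ≤ v ∧ v - base < newLabs.length ∧ v ∉ G.nodes then
        newLabs.get ⟨v - base, h.2.1⟩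
      else G.lab v
    edge_mem := by
      intro x y h
      exact ⟨Finset.mem_union_left _ (G.edge_mem h).1,
        Finset.mem_union_left _ (G.edge_mem h).2⟩ }

/-- The edge closure `cl_E`: the maximal episode covered by all instances of
`G` in `s` with span `< ρ`; it has an edge `(x,y)` whenever the (unique) valid
mapping of every such instance places `x` before `y`. -/
def clE (s : List α) (ρ : ℕ) (G : Episode α) : Episode α where
  nodes := G.nodes
  edge := fun x y => ∃ (hx : x ∈ G.nodes) (hy : y ∈ G.nodes),
    ∀ f, IsOcc s ρ G f → f ⟨x, hx⟩ < f ⟨y, hy⟩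
  lab := G.lab
  edge_mem := by rintro x y ⟨hx, hy, -⟩; exact ⟨hx, hy⟩

/-- The `i`-closure `icl(G) = cl_E(cl_N(G))`. -/
noncomputable def icl [LinearOrder α] (s : List α) (ρ : ℕ) (G : Episode α) :
    Episode α :=
  clE s ρ (clN s ρ G)

/-- The window `s[a, b]` (0-based, inclusive endpoints). -/
def window (s : List α) (a b : ℕ) : List α := (s.take (b + 1)).drop a

/-- `s[a,b]` is a minimal window of `G` in `s`: it covers `G` and no proper
subwindow of it covers `G`. -/
def IsMinimalWindow (s : List α) (G : Episode α) (a b : ℕ) : Prop :=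
  a ≤ b ∧ b < s.length ∧ Covers (window s a b) G ∧
    ∀ a' b', a ≤ a' → b' ≤ b → a' ≤ b' → (a', b') ≠ (a, b) →
      ¬ Covers (window s a' b') G

/-- Fixed-window frequency: the number of windows of length `ρ` (indexed by
their right endpoints, windows may stick out of the sequence) covering `G`. -/
noncomputable def freqF (s : List α) (ρ : ℕ) (G : Episode α) : ℕ :=
  ((Finset.range (s.length + ρ - 1)).filter
    (fun b => Covers (window s (b + 1 - ρ) b) G)).card

/-- Disjoint-window frequency: the maximal number of pairwise disjoint
intervals of length at most `ρ` whose windows cover `G`. -/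
noncomputable def freqD (s : List α) (ρ : ℕ) (G : Episode α) : ℕ :=
  sSup {n : ℕ | ∃ I : Fin n → ℕ × ℕ,
    (∀ i, (I i).1 ≤ (I i).2 ∧ (I i).2 < (I i).1 + ρ ∧ (I i).2 < s.length ∧
      Covers (window s (I i).1 (I i).2) G) ∧
    ∀ i j, i ≠ j → (I i).2 < (I j).1 ∨ (I j).2 < (I i).1}

/-- `G` is f-closed w.r.t. the fixed-window frequency. -/
noncomputable def FClosedF (s : List α) (ρ : ℕ) (G : Episode α) : Prop :=
  ¬ ∃ H : Episode α, inS H ∧ ProperSubep G H ∧ freqF s ρ H = freqF s ρ G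

/-- `G` is f-closed w.r.t. the disjoint-window frequency. -/
noncomputable def FClosedD (s : List α) (ρ : ℕ) (G : Episode α) : Prop :=
  ¬ ∃ H : Episode α, inS H ∧ ProperSubep G H ∧ freqD s ρ H = freqD s ρ G

/-- `G − e`: remove an edge. -/
def eraseEdge (G : Episode α) (e : ℕ × ℕ) : Episode α where
  nodes := G.nodes
  edge := fun x y => G.edge x y ∧ (x, y) ≠ e
  lab := G.lab
  edge_mem := by rintro x y ⟨h, -⟩; exact G.edge_mem h

/-- `G − v`: remove a node together with all incident edges. -/
def eraseNode (G : Episode α) (w : ℕ) : Episode α where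
  nodes := G.nodes.erase w
  edge := fun x y => G.edge x y ∧ x ≠ w ∧ y ≠ w
  lab := G.lab
  edge_mem := by
    rintro x y ⟨h, hx, hy⟩
    exact ⟨Finset.mem_erase.mpr ⟨hx, (G.edge_mem h).1⟩,
      Finset.mem_erase.mpr ⟨hy, (G.edge_mem h).2⟩⟩

/-- `G + e`: add an edge. -/
def addEdge (G : Episode α) (e : ℕ × ℕ) : Episode α where
  nodes := G.nodes ∪ {e.1, e.2}
  edge := fun x y => G.edge x y ∨ (x, y) = e
  lab := G.lab
  edge_mem := by
    rintro x y (h | h)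
    · exact ⟨Finset.mem_union_left _ (G.edge_mem h).1,
        Finset.mem_union_left _ (G.edge_mem h).2⟩
    · cases h
      exact ⟨Finset.mem_union_right _ (by simp), Finset.mem_union_right _ (by simp)⟩

/-- A skeleton edge: an edge `(v,w)` such that there is no two-step path
`v → u → w`. -/
def IsSkeletonEdge (G : Episode α) (e : ℕ × ℕ) : Prop :=
  G.edge e.1 e.2 ∧ ¬ ∃ u, G.edge e.1 u ∧ G.edge u e.2

/-- A proper skeleton edge: a skeleton edge whose endpoints carry different
labels. -/
def IsProperSkeletonEdge (G : Episode α) (e : ℕ × ℕ) : Prop :=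
  IsSkeletonEdge G e ∧ G.lab e.1 ≠ G.lab e.2

/-- The set of edges of `G`, as a set of pairs. -/
def edgeSet (G : Episode α) : Set (ℕ × ℕ) := {p | G.edge p.1 p.2}

/-- Lexicographic order on edges (using the canonical order of the nodes). -/
def edgeLT (e f : ℕ × ℕ) : Prop := e.1 < f.1 ∨ (e.1 = f.1 ∧ e.2 < f.2)

/-- `e` is the last (lexicographically largest) proper skeleton edge of `G`. -/
def IsLastEdge (G : Episode α) (e : ℕ × ℕ) : Prop :=
  IsProperSkeletonEdge G e ∧
    ∀ f, IsProperSkeletonEdge G f → f = e ∨ edgeLT f e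

/-- A solitary node: a node with no incident edges. -/
def Solitary (G : Episode α) (v : ℕ) : Prop :=
  v ∈ G.nodes ∧ ∀ u, ¬ G.edge u v ∧ ¬ G.edge v u

/-- A source node: a node with no incoming edges. -/
def IsSource (G : Episode α) (v : ℕ) : Prop := v ∈ G.nodes ∧ ∀ u, ¬ G.edge u v

/-- A proper skeleton edge `e` of `G` is derivable if `G ⪯ icl(G − e)`. -/
noncomputable def DerivableEdge [LinearOrder α] (s : List α) (ρ : ℕ)
    (G : Episode α) (e : ℕ × ℕ) : Prop :=
  IsProperSkeletonEdge G e ∧ Subep G (icl s ρ (G.eraseEdge e))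

/-- A solitary node `v` of `G` is derivable if `G ⪯ icl(G − v)`. -/
noncomputable def DerivableNode [LinearOrder α] (s : List α) (ρ : ℕ)
    (G : Episode α) (v : ℕ) : Prop :=
  Solitary G v ∧ Subep G (icl s ρ (G.eraseNode v))

/-- `GreedyFrom s t G f`: `f` is the greedy mapping of `G` in the suffix of `s`
starting at (0-based) position `t`, recording absolute indices of `s`:
repeatedly map the source node of `G` whose label has the earliest remaining
occurrence to that position, and recurse on the episode with that node
removed and the part of the sequence after that position. -/
inductive GreedyFrom (s : List α) : ℕ → Episode α → (ℕ → ℕ) → Prop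
  | empty (t : ℕ) (G : Episode α) (f : ℕ → ℕ) (hG : G.nodes = ∅) :
      GreedyFrom s t G f
  | step (t : ℕ) (G : Episode α) (f : ℕ → ℕ) (v k : ℕ)
      (hv : G.IsSource v) (ht : t ≤ k) (hk : k < s.length)
      (hlab : s.get ⟨k, hk⟩ = G.lab v)
      (hmin : ∀ j (hj : j < s.length), t ≤ j → j < k →
        ¬ ∃ w, G.IsSource w ∧ s.get ⟨j, hj⟩ = G.lab w)
      (hfv : f v = k)
      (hrec : GreedyFrom s (k + 1) (G.eraseNode v) f) :
      GreedyFrom s t G f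

/-- One step of removing a derivable proper skeleton edge or a derivable
solitary node. -/
noncomputable def RemStep [LinearOrder α] (s : List α) (ρ : ℕ) :
    Episode α → Episode α → Prop := fun G G' =>
  (∃ e, DerivableEdge s ρ G e ∧ G' = G.eraseEdge e) ∨
  (∃ v, DerivableNode s ρ G v ∧ G' = G.eraseNode v)

end Episode

/-!
Suppose `icl(G) ≠ G`. We exhibit `H ∈ 𝒮` with `G ≺ H` such that every window of length at most
`ρ` covers `G` iff it covers `H`; then both frequencies of `H` and `G` agree, so `G` is not
f-closed.

If `G` occurs in `s` within a window of length `ρ`, take `H = icl(G)`. An occurrence of `G`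
extends to one of `cl_N(G)` inside the same window, since the added symbols occur in the window
of every occurrence, and every occurrence of `cl_N(G)` respects the edges of `cl_E`. Either
`cl_N(G)` has more nodes than `G`, so that `icl(G) ⪯ G` fails by counting, or `cl_N(G) = G` and
`icl(G)` has an edge `(x, y)` that `G` lacks. In the latter case an instance of `G` with `y` placed before `x` covers `G` but not
`icl(G)`, because a strict episode has only one valid mapping into its instance.

If `G` never occurs, no short window covers `G`, nor `G` extended by a node above all others.
-/

open Finset Relation Function

theorem Finset.card_filter_lt_lt_card_filter_lt {ι β : Type*} [LinearOrder β] {S : Finset ι}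
    {f : ι → β} {u v : ι} (hu : u ∈ S) (huv : f u < f v) :
    #{w ∈ S | f w < f u} < #{w ∈ S | f w < f v} := by
  refine card_lt_card ((ssubset_iff_of_subset ?_).2 ⟨u, ?_, ?_⟩)
  · exact monotone_filter_right _ fun w _ h => h.trans huv
  · simp [hu, huv]
  · simp

theorem Finset.eq_of_card_filter_lt_eq {ι β : Type*} [LinearOrder β] {S : Finset ι}
    {f : ι → β} {u v : ι} (hu : u ∈ S) (hv : v ∈ S)
    (h : #{w ∈ S | f w < f u} = #{w ∈ S | f w < f v}) : f u = f v := by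
  rcases lt_trichotomy (f u) (f v) with huv | huv | huv
  · exact absurd h (card_filter_lt_lt_card_filter_lt hu huv).ne
  · exact huv
  · exact absurd h (card_filter_lt_lt_card_filter_lt hv huv).ne'

theorem Finset.card_filter_transGen_lt {ι : Type*} {r : ι → ι → Prop} (N : Finset ι)
    (hr : ∀ v, ¬ TransGen r v v) {u v : ι} (hu : u ∈ N) (huv : r u v) :
    #{w ∈ N | TransGen r w u} < #{w ∈ N | TransGen r w v} := by
  refine card_lt_card ((ssubset_iff_of_subset ?_).2 ⟨u, ?_, ?_⟩)
  · exact monotone_filter_right _ fun w _ h => h.tail huv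
  · simp [hu, TransGen.single huv]
  · simp [hr u]

/-- Topological sorting: rank the elements by their number of predecessors, ties broken by the
order of `ι`. -/
theorem Finset.exists_equiv_fin_of_acyclic {ι : Type*} [LinearOrder ι] (N : Finset ι)
    {r : ι → ι → Prop} (hr : ∀ v, ¬ TransGen r v v) :
    ∃ e : {v // v ∈ N} ≃ Fin #N, ∀ u v : {v // v ∈ N}, r u v → e u < e v := by
  let key : ι → ℕ ×ₗ ι := fun v => toLex (#{u ∈ N | TransGen r u v}, v)
  let rank : {v // v ∈ N} → Fin #N := fun v =>
    ⟨#{u ∈ N | key u < key v}, card_lt_card (filter_ssubset.2 ⟨v, v.2, lt_irrefl _⟩)⟩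
  have hrank_inj : Injective rank := fun u v h =>
    Subtype.ext (congrArg (·.2) (eq_of_card_filter_lt_eq u.2 v.2 (congrArg Fin.val h)))
  refine ⟨Equiv.ofBijective rank ((Fintype.bijective_iff_injective_and_card rank).2
    ⟨hrank_inj, by simp⟩), fun u v huv => ?_⟩
  refine Fin.lt_def.2 (card_filter_lt_lt_card_filter_lt u.2 (Prod.Lex.toLex_lt_toLex.2 ?_))
  exact Or.inl (card_filter_transGen_lt N hr u.2 huv)

namespace Episode

variable {α : Type*}

theorem ext {G H : Episode α} (hN : G.nodes = H.nodes) (hE : G.edge = H.edge)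
    (hL : G.lab = H.lab) : G = H := by
  cases G; cases H; simp_all

def IsSubgraph (G H : Episode α) : Prop :=
  G.nodes ⊆ H.nodes ∧ (∀ v ∈ G.nodes, H.lab v = G.lab v) ∧ ∀ u v, G.edge u v → H.edge u v

theorem IsSubgraph.trans {G H K : Episode α} (hGH : IsSubgraph G H) (hHK : IsSubgraph H K) :
    IsSubgraph G K :=
  ⟨hGH.1.trans hHK.1, fun v hv => (hHK.2.1 v (hGH.1 hv)).trans (hGH.2.1 v hv),
    fun u v h => hHK.2.2 u v (hGH.2.2 u v h)⟩

theorem Covers.of_isSubgraph {t : List α} {G H : Episode α} (hGH : IsSubgraph G H)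
    (h : Covers t H) : Covers t G := by
  obtain ⟨g, hg_inj, hg_lab, hg_edge⟩ := h
  exact ⟨fun v => g ⟨v, hGH.1 v.2⟩, fun u v huv => Subtype.ext (Subtype.mk.inj (hg_inj huv)),
    fun v => (hg_lab _).trans (hGH.2.1 v v.2), fun u v huv => hg_edge _ _ (hGH.2.2 u v huv)⟩

theorem isSubgraph_restrict_nodes {G H : Episode α} (hGH : IsSubgraph G H) :
    IsSubgraph G (H.restrict G.nodes) :=
  ⟨subset_rfl, hGH.2.1, fun u v h => ⟨(G.edge_mem h).1, (G.edge_mem h).2, hGH.2.2 u v h⟩⟩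

theorem subep_of_isSubgraph {G H : Episode α} (hGH : IsSubgraph G H) : Subep G H :=
  ⟨G.nodes, hGH.1, rfl, fun _ => Covers.of_isSubgraph (isSubgraph_restrict_nodes hGH)⟩

theorem restrict_isSubgraph {H : Episode α} {U : Finset ℕ} (hU : U ⊆ H.nodes) :
    IsSubgraph (H.restrict U) H :=
  ⟨hU, fun _ _ => rfl, fun _ _ h => h.2.2⟩

theorem IsSubgraph.acyclic {G H : Episode α} (hGH : IsSubgraph G H) (hH : H.Acyclic) :
    G.Acyclic :=
  fun v hv => hH v (TransGen.mono hGH.2.2 v v hv)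

theorem lt_of_transGen {β : Type*} [Preorder β] {G : Episode α} {g : {v // v ∈ G.nodes} → β}
    (hg : ∀ u v, G.edge u.1 v.1 → g u < g v) {a b : ℕ} (h : TransGen G.edge a b)
    (ha : a ∈ G.nodes) (hb : b ∈ G.nodes) : g ⟨a, ha⟩ < g ⟨b, hb⟩ := by
  induction h with
  | single h => exact hg ⟨a, ha⟩ ⟨_, hb⟩ h
  | tail _ hcb ih => exact (ih (G.edge_mem hcb).1).trans (hg _ ⟨_, hb⟩ hcb)

theorem lt_iff_transGen_of_lab_eq {β : Type*} [Preorder β] {G : Episode α} (hG : G.Strict)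
    {g : {v // v ∈ G.nodes} → β} (hg : ∀ u v, G.edge u.1 v.1 → g u < g v)
    {u v : {v // v ∈ G.nodes}} (hlab : G.lab u = G.lab v) :
    g u < g v ↔ TransGen G.edge u v := by
  refine ⟨fun h => ?_, fun h => lt_of_transGen hg h u.2 v.2⟩
  have hne : u.1 ≠ v.1 := fun he => (Subtype.ext he ▸ h).false
  exact (hG u u.2 v v.2 hne hlab).resolve_right fun hvu => h.asymm (lt_of_transGen hg hvu v.2 u.2)

/-- Along each label class, which is a chain, both maps enumerate the positions carrying that label
in increasing order. -/
theorem eq_of_isInstanceMap {G : Episode α} (hG : G.Strict) {t : List α}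
    {p g : {v // v ∈ G.nodes} → Fin t.length} (hp : IsInstanceMap t G p) (hg_inj : Injective g)
    (hg_lab : ∀ v, t.get (g v) = G.lab v) (hg_edge : ∀ u v, G.edge u.1 v.1 → g u < g v) :
    g = p := by
  obtain ⟨hp_bij, hp_lab, hp_edge⟩ := hp
  funext v
  set C : Finset {v // v ∈ G.nodes} := {u | G.lab u = G.lab v}
  set S : Finset (Fin t.length) := {i | t.get i = G.lab v}
  have hpC : C.image p = S := by
    ext i
    obtain ⟨u, rfl⟩ := hp_bij.2 i
    simp only [hp_bij.1.mem_finset_image, C, S, mem_filter, mem_univ, true_and, hp_lab]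
  have hgC : C.image g = S := by
    refine eq_of_subset_of_card_le (fun i hi => ?_) ?_
    · obtain ⟨u, hu, rfl⟩ := mem_image.1 hi
      simpa only [S, mem_filter, mem_univ, true_and, hg_lab] using (mem_filter.1 hu).2
    · rw [← hpC, card_image_of_injective _ hp_bij.1, card_image_of_injective _ hg_inj]
  have hrank : #{i ∈ C.image g | i < g v} = #{i ∈ C.image p | i < p v} := by
    rw [filter_image, filter_image, card_image_of_injective _ hp_bij.1,
      card_image_of_injective _ hg_inj]
    refine congrArg card (filter_congr fun u hu => ?_)
    have hlab : G.lab u = G.lab v := (mem_filter.1 hu).2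
    rw [lt_iff_transGen_of_lab_eq hG hg_edge hlab, lt_iff_transGen_of_lab_eq hG hp_edge hlab]
  rw [hgC, hpC] at hrank
  have hvC : v ∈ C := by simp [C]
  exact eq_of_card_filter_lt_eq (f := id) (hgC ▸ mem_image_of_mem g hvC)
    (hpC ▸ mem_image_of_mem p hvC) hrank

theorem exists_isInstanceMap (G : Episode α) {r : ℕ → ℕ → Prop} (hr : ∀ v, ¬ TransGen r v v)
    (hGr : ∀ u v, G.edge u v → r u v) :
    ∃ (t : List α) (p : {v // v ∈ G.nodes} → Fin t.length),
      IsInstanceMap t G p ∧ ∀ u v : {v // v ∈ G.nodes}, r u v → p u < p v := by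
  obtain ⟨e, he⟩ := G.nodes.exists_equiv_fin_of_acyclic hr
  let t := List.ofFn fun i => G.lab (e.symm i)
  let p := e.trans (finCongr (List.length_ofFn (f := fun i => G.lab (e.symm i))).symm)
  have hpr : ∀ u v : {v // v ∈ G.nodes}, r u v → p u < p v := fun u v h => by
    simpa [p] using he u v h
  exact ⟨t, p, ⟨p.bijective, fun v => by simp [t, p], fun u v h => hpr u v (hGr _ _ h)⟩, hpr⟩

theorem transGen_addEdge {G : Episode α} {x y a c : ℕ}
    (h : TransGen (G.addEdge (x, y)).edge a c) :
    TransGen G.edge a c ∨ ReflTransGen G.edge a x ∧ ReflTransGen G.edge y c := by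
  induction h with
  | single h =>
    rcases h with h | h
    · exact Or.inl (.single h)
    · obtain ⟨rfl, rfl⟩ := Prod.mk.inj h
      exact Or.inr ⟨.refl, .refl⟩
  | tail _ h ih =>
    rcases h with h | h
    · exact ih.imp (·.tail h) fun hac => ⟨hac.1, hac.2.tail h⟩
    · obtain ⟨rfl, rfl⟩ := Prod.mk.inj h
      exact Or.inr ⟨ih.elim (·.to_reflTransGen) (·.1), .refl⟩

theorem acyclic_addEdge {G : Episode α} (hGa : G.Acyclic) (hGt : G.TransClosed) {x y : ℕ}
    (hne : y ≠ x) (hyx : ¬ G.edge y x) : (G.addEdge (x, y)).Acyclic := by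
  intro v hv
  rcases transGen_addEdge hv with h | ⟨hvx, hyv⟩
  · exact hGa v h
  · exact (reflTransGen_iff_eq_or_transGen.1 (hyv.trans hvx)).elim
      (fun h => hne h.symm) (fun h => hyx (hGt h))

/-- An instance of `G` placing `y` before `x` covers `G` but not `H`, since its only valid mapping
of `G` is the instance map itself. -/
theorem not_subep_of_isSubgraph_of_edge {G H : Episode α} (hGt : G.TransClosed)
    (hGs : G.Strict) (hN : H.nodes = G.nodes) (hGH : IsSubgraph G H) (hH : H.Acyclic)
    {x y : ℕ} (hxy : H.edge x y) (hnxy : ¬ G.edge x y) : ¬ Subep H G := by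
  have hx : x ∈ G.nodes := hN ▸ (H.edge_mem hxy).1
  have hy : y ∈ G.nodes := hN ▸ (H.edge_mem hxy).2
  have hne : x ≠ y := by rintro rfl; exact hH x (.single hxy)
  obtain ⟨t, p, hp, hpr⟩ := G.exists_isInstanceMap
    (acyclic_addEdge (hGH.acyclic hH) hGt hne hnxy) fun u v h => Or.inl h
  rintro ⟨U, hUG, hUcard, hcov⟩
  obtain rfl : U = G.nodes := eq_of_subset_of_card_le hUG (by rw [hUcard, hN])
  obtain ⟨g, hg_inj, hg_lab, hg_edge⟩ :=
    hcov t (Covers.of_isSubgraph (restrict_isSubgraph subset_rfl) ⟨p, hp.1.1, hp.2⟩)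
  have hgp : (fun v : {v // v ∈ G.nodes} => g ⟨v, hGH.1 v.2⟩) = p :=
    eq_of_isInstanceMap hGs hp (fun u v h => Subtype.ext (Subtype.mk.inj (hg_inj h)))
      (fun v => (hg_lab _).trans (hGH.2.1 v v.2)) fun u v h => hg_edge _ _ (hGH.2.2 _ _ h)
  have hpxy : p ⟨x, hx⟩ < p ⟨y, hy⟩ := hgp ▸ hg_edge ⟨x, _⟩ ⟨y, _⟩ hxy
  exact hpxy.asymm (hpr ⟨y, hy⟩ ⟨x, hx⟩ (Or.inr rfl))

def fresh (G : Episode α) : ℕ := G.nodes.sup id + 1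

theorem lt_fresh {G : Episode α} {v : ℕ} (hv : v ∈ G.nodes) : v < G.fresh :=
  Nat.lt_succ_of_le (le_sup (f := id) hv)

theorem fresh_add_not_mem (G : Episode α) (i : ℕ) : G.fresh + i ∉ G.nodes :=
  fun h => (lt_fresh h).not_ge (Nat.le_add_right _ _)

theorem fresh_not_mem (G : Episode α) : G.fresh ∉ G.nodes :=
  fun h => lt_irrefl _ (lt_fresh h)

section NodeClosure

variable [LinearOrder α] (s : List α) (ρ : ℕ)

/-- The list `newLabs` in the definition of `clN`. -/
noncomputable def newLabels (G : Episode α) : List α :=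
  (s.toFinset.filter
      (fun x => (∀ f, IsOcc s ρ G f → SymInWindow s f x) ∧
        ∀ v ∈ G.nodes, G.lab v ≠ x)).sort (· ≤ ·)

variable {s ρ} {G : Episode α}

theorem mem_newLabels {x : α} :
    x ∈ newLabels s ρ G ↔ x ∈ s.toFinset ∧
      (∀ f, IsOcc s ρ G f → SymInWindow s f x) ∧ ∀ v ∈ G.nodes, G.lab v ≠ x := by
  rw [newLabels, mem_sort, mem_filter]

theorem clN_nodes :
    (clN s ρ G).nodes = G.nodes ∪ (range (newLabels s ρ G).length).image (G.fresh + ·) :=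
  rfl

theorem clN_lab (v : ℕ) : (clN s ρ G).lab v =
    if h : G.fresh ≤ v ∧ v - G.fresh < (newLabels s ρ G).length ∧ v ∉ G.nodes then
      (newLabels s ρ G)[v - G.fresh] else G.lab v :=
  rfl

theorem mem_clN_nodes {w : ℕ} :
    w ∈ (clN s ρ G).nodes ↔ w ∈ G.nodes ∨ ∃ i < (newLabels s ρ G).length, G.fresh + i = w := by
  simp only [clN_nodes, mem_union, mem_image, mem_range]

theorem clN_lab_of_mem {v : ℕ} (hv : v ∈ G.nodes) : (clN s ρ G).lab v = G.lab v :=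
  (clN_lab v).trans (dif_neg fun h => h.2.2 hv)

theorem clN_lab_fresh_add {i : ℕ} (hi : i < (newLabels s ρ G).length) :
    (clN s ρ G).lab (G.fresh + i) = (newLabels s ρ G)[i] := by
  rw [clN_lab, dif_pos ⟨Nat.le_add_right _ _, by simpa using hi, fresh_add_not_mem G i⟩]
  simp

theorem clN_lab_mem_newLabels {w : ℕ} (hw : w ∈ (clN s ρ G).nodes) (hwG : w ∉ G.nodes) :
    (clN s ρ G).lab w ∈ newLabels s ρ G := by
  obtain hw | ⟨i, hi, rfl⟩ := mem_clN_nodes.1 hw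
  · exact absurd hw hwG
  · rw [clN_lab_fresh_add hi]
    exact List.getElem_mem hi

theorem eq_of_clN_lab_eq {w w' : ℕ} (hw : w ∈ (clN s ρ G).nodes) (hwG : w ∉ G.nodes)
    (hw' : w' ∈ (clN s ρ G).nodes) (hlab : (clN s ρ G).lab w = (clN s ρ G).lab w') : w = w' := by
  obtain hw' | ⟨j, hj, rfl⟩ := mem_clN_nodes.1 hw'
  · have hnew := (mem_newLabels.1 (clN_lab_mem_newLabels hw hwG)).2.2 w' hw'
    exact absurd (hlab.trans (clN_lab_of_mem hw')) (Ne.symm hnew)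
  · obtain hw | ⟨i, hi, rfl⟩ := mem_clN_nodes.1 hw
    · exact absurd hw hwG
    · rw [clN_lab_fresh_add hi, clN_lab_fresh_add hj] at hlab
      rw [(sort_nodup _ _).getElem_inj_iff.1 hlab]

theorem clN_eq_self_or_card_lt (G : Episode α) :
    clN s ρ G = G ∨ #G.nodes < #(clN s ρ G).nodes := by
  by_cases h : newLabels s ρ G = []
  · left
    refine ext (by simp [clN_nodes, h]) rfl (funext fun v => (clN_lab v).trans (dif_neg ?_))
    simp [h]
  · right
    refine card_lt_card ((ssubset_iff_of_subset fun v hv => mem_clN_nodes.2 (Or.inl hv)).2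
      ⟨G.fresh + 0, mem_clN_nodes.2 (Or.inr ⟨0, List.length_pos_iff.2 h, rfl⟩),
        fresh_add_not_mem G 0⟩)

theorem isSubgraph_clN (G : Episode α) : IsSubgraph G (clN s ρ G) :=
  ⟨fun _ hv => mem_clN_nodes.2 (Or.inl hv), fun _ hv => clN_lab_of_mem hv, fun _ _ h => h⟩

theorem clN_strict (hG : G.Strict) : (clN s ρ G).Strict := by
  intro u hu v hv hne hlab
  by_cases huG : u ∈ G.nodes
  · by_cases hvG : v ∈ G.nodes
    · rw [clN_lab_of_mem huG, clN_lab_of_mem hvG] at hlab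
      exact hG u huG v hvG hne hlab
    · exact absurd (eq_of_clN_lab_eq hv hvG hu hlab.symm) hne.symm
  · exact absurd (eq_of_clN_lab_eq hu huG hv hlab) hne

end NodeClosure

section EdgeClosure

variable (s : List α) (ρ : ℕ)

theorem isSubgraph_clE (H : Episode α) : IsSubgraph H (clE s ρ H) :=
  ⟨subset_rfl, fun _ _ => rfl, fun u v h =>
    ⟨(H.edge_mem h).1, (H.edge_mem h).2, fun _ hf => hf.2.2.1 ⟨u, _⟩ ⟨v, _⟩ h⟩⟩

theorem clE_transClosed (H : Episode α) : (clE s ρ H).TransClosed := by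
  intro u v h
  induction h with
  | single h => exact h
  | tail _ hbc ih =>
    obtain ⟨hu, _, hub⟩ := ih
    obtain ⟨_, hc, hbc⟩ := hbc
    exact ⟨hu, hc, fun f hf => (hub f hf).trans (hbc f hf)⟩

variable {s ρ} {H : Episode α}

theorem clE_acyclic (hH : Occurs s ρ H) : (clE s ρ H).Acyclic := by
  intro v hv
  obtain ⟨f, hf⟩ := hH
  obtain ⟨_, _, hvv⟩ := clE_transClosed s ρ H hv
  exact lt_irrefl _ (hvv f hf)

theorem clE_strict (hH : H.Strict) : (clE s ρ H).Strict := fun u hu v hv hne hlab =>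
  (hH u hu v hv hne hlab).imp (TransGen.mono (isSubgraph_clE s ρ H).2.2 u v)
    (TransGen.mono (isSubgraph_clE s ρ H).2.2 v u)

end EdgeClosure

section Closure

variable [LinearOrder α] {s : List α} {ρ : ℕ} {G : Episode α}

theorem IsOcc.exists_clN {f : {v // v ∈ G.nodes} → Fin s.length} (hf : IsOcc s ρ G f) :
    ∃ F, IsOcc s ρ (clN s ρ G) F ∧ ∀ w, (∃ u, f u ≤ F w) ∧ ∃ v, F w ≤ f v := by
  obtain ⟨hinj, hlab, hedge, hspan⟩ := hf
  have hnew : ∀ w : {w // w ∈ (clN s ρ G).nodes}, w.1 ∉ G.nodes →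
      SymInWindow s f ((clN s ρ G).lab w) := fun w hw =>
    (mem_newLabels.1 (clN_lab_mem_newLabels w.2 hw)).2.1 f ⟨hinj, hlab, hedge, hspan⟩
  choose P hP_lab hP_hull using hnew
  let F : {w // w ∈ (clN s ρ G).nodes} → Fin s.length := fun w =>
    if hw : w.1 ∈ G.nodes then f ⟨w, hw⟩ else P w hw
  have hF_lab : ∀ w, s.get (F w) = (clN s ρ G).lab w := by
    intro w
    by_cases hw : w.1 ∈ G.nodes
    · simp only [F, dif_pos hw, hlab, clN_lab_of_mem hw]
    · simp only [F, dif_neg hw, hP_lab]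
  have hF_hull : ∀ w, (∃ u, f u ≤ F w) ∧ ∃ v, F w ≤ f v := by
    intro w
    by_cases hw : w.1 ∈ G.nodes
    · simp only [F, dif_pos hw]
      exact ⟨⟨_, le_rfl⟩, _, le_rfl⟩
    · simp only [F, dif_neg hw]
      exact hP_hull w hw
  refine ⟨F, ⟨fun w w' h => ?_, hF_lab, fun u v h => ?_, fun u v => ?_⟩, hF_hull⟩
  · have hlab_eq : (clN s ρ G).lab w = (clN s ρ G).lab w' := by rw [← hF_lab, h, hF_lab]
    by_cases hw : w.1 ∈ G.nodes
    · by_cases hw' : w'.1 ∈ G.nodes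
      · simp only [F, dif_pos hw, dif_pos hw'] at h
        exact Subtype.ext (Subtype.mk.inj (hinj h))
      · exact Subtype.ext (eq_of_clN_lab_eq w'.2 hw' w.2 hlab_eq.symm).symm
    · exact Subtype.ext (eq_of_clN_lab_eq w.2 hw w'.2 hlab_eq)
  · have hu := (G.edge_mem h).1
    have hv := (G.edge_mem h).2
    simp only [F, dif_pos hu, dif_pos hv]
    exact hedge ⟨u, hu⟩ ⟨v, hv⟩ h
  · obtain ⟨-, u', hu'⟩ := hF_hull u
    obtain ⟨⟨v', hv'⟩, -⟩ := hF_hull v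
    have := hspan u' v'
    rw [Fin.le_def] at hu' hv'
    omega

theorem Occurs.clN (h : Occurs s ρ G) : Occurs s ρ (clN s ρ G) :=
  let ⟨_, hf⟩ := h
  let ⟨F, hF, _⟩ := hf.exists_clN
  ⟨F, hF⟩

theorem isSubgraph_icl (G : Episode α) : IsSubgraph G (icl s ρ G) :=
  (isSubgraph_clN G).trans (isSubgraph_clE s ρ _)

theorem inS_icl (hG : G.Strict) (hocc : Occurs s ρ G) : inS (icl s ρ G) :=
  ⟨clE_acyclic hocc.clN, clE_transClosed s ρ _, clE_strict (clN_strict hG)⟩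

theorem not_subep_icl (hGt : G.TransClosed) (hGs : G.Strict) (hocc : Occurs s ρ G)
    (hne : icl s ρ G ≠ G) : ¬ Subep (icl s ρ G) G := by
  rcases clN_eq_self_or_card_lt (s := s) (ρ := ρ) G with hN | hcard
  · rw [icl, hN] at hne ⊢
    obtain ⟨x, y, hxy, hnxy⟩ : ∃ x y, (clE s ρ G).edge x y ∧ ¬ G.edge x y := by
      by_contra! h
      exact hne (ext rfl (funext₂ fun x y => propext ⟨h x y, (isSubgraph_clE s ρ G).2.2 x y⟩) rfl)
    exact not_subep_of_isSubgraph_of_edge hGt hGs rfl (isSubgraph_clE s ρ G) (clE_acyclic hocc)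
      hxy hnxy
  · rintro ⟨U, hUG, hUcard, -⟩
    exact (card_le_card hUG).not_gt (hUcard ▸ hcard)

end Closure

section Windows

variable {s : List α} {a b : ℕ}

theorem length_window : (window s a b).length = min (b + 1) s.length - a := by
  simp [window]

theorem add_lt_length_of_lt_length_window {j : ℕ} (hj : j < (window s a b).length) :
    a + j < s.length ∧ a + j ≤ b := by
  rw [length_window] at hj
  omega

theorem get_window (j : Fin (window s a b).length) :
    (window s a b).get j = s.get ⟨a + j, (add_lt_length_of_lt_length_window j.2).1⟩ := by
  rw [List.get_eq_getElem, List.get_eq_getElem]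
  exact (List.getElem_drop ..).trans (List.getElem_take ..)

theorem covers_window_iff {G : Episode α} :
    Covers (window s a b) G ↔ ∃ F : {v // v ∈ G.nodes} → Fin s.length, Injective F ∧
      (∀ v, s.get (F v) = G.lab v) ∧ (∀ u v : {v // v ∈ G.nodes}, G.edge u v → F u < F v) ∧
      ∀ v, a ≤ F v ∧ F v ≤ b := by
  constructor
  · rintro ⟨f, hinj, hlab, hedge⟩
    refine ⟨fun v => ⟨a + f v, (add_lt_length_of_lt_length_window (f v).2).1⟩,
      fun u v h => hinj (Fin.ext ?_), fun v => ?_, fun u v h => ?_, fun v => ?_⟩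
    · exact Nat.add_left_cancel (congrArg Fin.val h)
    · rw [← hlab, get_window]
    · exact Fin.lt_def.2 (Nat.add_lt_add_left (Fin.lt_def.1 (hedge u v h)) a)
    · exact ⟨Nat.le_add_right _ _, (add_lt_length_of_lt_length_window (f v).2).2⟩
  · rintro ⟨F, hinj, hlab, hedge, hbd⟩
    have hlt : ∀ v, F v - a < (window s a b).length := fun v => by
      rw [length_window]
      have := hbd v
      have := (F v).2
      omega
    refine ⟨fun v => ⟨F v - a, hlt v⟩, fun u v h => hinj (Fin.ext ?_), fun v => ?_,
      fun u v h => ?_⟩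
    · have huv : (F u : ℕ) - a = F v - a := congrArg Fin.val h
      have := (hbd u).1
      have := (hbd v).1
      omega
    · rw [get_window, ← hlab]
      congr 1
      exact Fin.ext (Nat.add_sub_cancel' (hbd v).1)
    · exact Fin.lt_def.2 (Nat.sub_lt_sub_right (hbd u).1 (Fin.lt_def.1 (hedge u v h)))

variable {ρ : ℕ} {G : Episode α}

theorem Covers.exists_isOcc_of_window (hab : b < a + ρ) (h : Covers (window s a b) G) :
    ∃ F, IsOcc s ρ G F ∧ ∀ v, a ≤ F v ∧ F v ≤ b := by
  obtain ⟨F, hinj, hlab, hedge, hbd⟩ := covers_window_iff.1 h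
  exact ⟨F, ⟨hinj, hlab, hedge, fun u v => by have := hbd u; have := hbd v; omega⟩, hbd⟩

theorem Occurs.of_covers_window (hab : b < a + ρ) (h : Covers (window s a b) G) :
    Occurs s ρ G :=
  let ⟨F, hF, _⟩ := h.exists_isOcc_of_window hab
  ⟨F, hF⟩

def WindowEquiv (s : List α) (ρ : ℕ) (G H : Episode α) : Prop :=
  ∀ a b, b < a + ρ → (Covers (window s a b) G ↔ Covers (window s a b) H)

theorem freqF_eq_of_windowEquiv {H : Episode α} (h : WindowEquiv s ρ G H) :
    freqF s ρ G = freqF s ρ H :=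
  congrArg card (filter_congr fun b _ => h (b + 1 - ρ) b (by omega))

theorem freqD_eq_of_windowEquiv {H : Episode α} (h : WindowEquiv s ρ G H) :
    freqD s ρ G = freqD s ρ H := by
  unfold freqD
  congr 1
  ext n
  refine exists_congr fun I => and_congr_left fun _ => forall_congr' fun i => ?_
  exact ⟨fun hi => ⟨hi.1, hi.2.1, hi.2.2.1, (h _ _ hi.2.1).1 hi.2.2.2⟩,
    fun hi => ⟨hi.1, hi.2.1, hi.2.2.1, (h _ _ hi.2.1).2 hi.2.2.2⟩⟩

theorem windowEquiv_icl [LinearOrder α] : WindowEquiv s ρ G (icl s ρ G) := by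
  intro a b hab
  refine ⟨fun h => ?_, Covers.of_isSubgraph (isSubgraph_icl G)⟩
  obtain ⟨F, hF, hbd⟩ := h.exists_isOcc_of_window hab
  obtain ⟨F', hF', hhull⟩ := hF.exists_clN
  refine covers_window_iff.2 ⟨F', hF'.1, hF'.2.1, fun u v ⟨_, _, huv⟩ => huv F' hF', fun w => ?_⟩
  obtain ⟨⟨u, hu⟩, v, hv⟩ := hhull w
  have := (hbd u).1
  have := (hbd v).2
  rw [Fin.le_def] at hu hv
  omega

end Windows

section TopExtension

def topExt (G : Episode α) : Episode α where
  nodes := insert G.fresh G.nodes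
  edge := fun x y => G.edge x y ∨ (x ∈ G.nodes ∧ y = G.fresh)
  lab := G.lab
  edge_mem := by
    rintro x y (h | ⟨hx, rfl⟩)
    · exact ⟨mem_insert_of_mem (G.edge_mem h).1, mem_insert_of_mem (G.edge_mem h).2⟩
    · exact ⟨mem_insert_of_mem hx, mem_insert_self _ _⟩

variable {G : Episode α}

theorem mem_of_transGen {a b : ℕ} (h : TransGen G.edge a b) : a ∈ G.nodes :=
  let ⟨_, hac, _⟩ := TransGen.head'_iff.1 h
  (G.edge_mem hac).1

theorem transGen_topExt {a c : ℕ} (h : TransGen G.topExt.edge a c) :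
    TransGen G.edge a c ∨ (a ∈ G.nodes ∧ c = G.fresh) := by
  induction h with
  | single h => exact h.imp_left .single
  | tail _ hbc ih =>
    rcases hbc with hbc | ⟨hb, rfl⟩
    · rcases ih with ih | ⟨-, rfl⟩
      · exact Or.inl (ih.tail hbc)
      · exact absurd (G.edge_mem hbc).1 G.fresh_not_mem
    · exact Or.inr ⟨ih.elim mem_of_transGen (·.1), rfl⟩

theorem inS_topExt (hG : inS G) : inS G.topExt := by
  obtain ⟨hGa, hGt, hGs⟩ := hG
  refine ⟨fun v hv => ?_, fun u v h => ?_, fun u hu v hv hne hlab => ?_⟩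
  · rcases transGen_topExt hv with h | ⟨hv, rfl⟩
    · exact hGa v h
    · exact G.fresh_not_mem hv
  · exact (transGen_topExt h).imp_left (hGt ·)
  · rcases mem_insert.1 hu with rfl | hu <;> rcases mem_insert.1 hv with rfl | hv
    · exact absurd rfl hne
    · exact Or.inr (.single (Or.inr ⟨hv, rfl⟩))
    · exact Or.inl (.single (Or.inr ⟨hu, rfl⟩))
    · exact (hGs u hu v hv hne hlab).imp (TransGen.mono (fun _ _ => Or.inl) u v)
        (TransGen.mono (fun _ _ => Or.inl) v u)

theorem isSubgraph_topExt (G : Episode α) : IsSubgraph G G.topExt :=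
  ⟨subset_insert _ _, fun _ _ => rfl, fun _ _ => Or.inl⟩

theorem properSubep_topExt (G : Episode α) : ProperSubep G G.topExt := by
  refine ⟨subep_of_isSubgraph (isSubgraph_topExt G), ?_⟩
  rintro ⟨U, hUG, hUcard, -⟩
  have hcard : #G.topExt.nodes = #G.nodes + 1 := card_insert_of_notMem G.fresh_not_mem
  have := card_le_card hUG
  omega

theorem windowEquiv_topExt {s : List α} {ρ : ℕ} (h : ¬ Occurs s ρ G) :
    WindowEquiv s ρ G G.topExt := fun _ _ hab =>
  iff_of_false (fun hG => h (.of_covers_window hab hG))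
    fun hT => h (.of_covers_window hab (Covers.of_isSubgraph (isSubgraph_topExt G) hT))

end TopExtension

theorem exists_properSubep_windowEquiv [LinearOrder α] {s : List α} {ρ : ℕ} {G : Episode α}
    (hG : inS G) (hne : icl s ρ G ≠ G) : ∃ H, inS H ∧ ProperSubep G H ∧ WindowEquiv s ρ G H := by
  by_cases hocc : Occurs s ρ G
  · exact ⟨icl s ρ G, inS_icl hG.2.2 hocc, ⟨subep_of_isSubgraph (isSubgraph_icl G),
      not_subep_icl hG.2.1 hG.2.2 hocc hne⟩, windowEquiv_icl⟩
  · exact ⟨G.topExt, inS_topExt hG, properSubep_topExt G, windowEquiv_topExt hocc⟩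

end Episode

open Episode in
/-- Every f-closed strict transitively closed episode (w.r.t. either the
fixed-window or the disjoint-window frequency) is i-closed. -/
theorem stmt9 {α : Type*} [LinearOrder α] (s : List α) (ρ : ℕ)
    (G : Episode α) (hG : inS G) :
    (FClosedF s ρ G → icl s ρ G = G) ∧ (FClosedD s ρ G → icl s ρ G = G) := by
  constructor
  · intro hclosed
    by_contra hne
    obtain ⟨H, hH, hGH, hw⟩ := exists_properSubep_windowEquiv hG hne
    exact hclosed ⟨H, hH, hGH, (freqF_eq_of_windowEquiv hw).symm⟩
  · intro hclosed
    by_contra hne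
    obtain ⟨H, hH, hGH, hw⟩ := exists_properSubep_windowEquiv hG hne
    exact hclosed ⟨H, hH, hGH, (freqD_eq_of_windowEquiv hw).symm⟩
end

section
/- Let G be a strict, transitively closed episode, let e = (x, y) be an edge not in E(G), and let H = G + e. Assume H is a directed acyclic graph. Then H is transitively closed (and hence a strict, transitively closed episode) if and only if (x, c) ∈ E(G) for every child c of y in G and (p, y) ∈ E(G) for every parent p of x in G. -/
/-!
Being transitively closed is the same as having a transitive edge relation, and adding `(x, y)`
creates only the new two-step paths `p → x → y` and `x → y → c`, so `G + e` is
transitively closed exactly when these shortcuts `p → y` and `x → c` are already edges of `G`.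
Strictness survives since `G + e` has the same nodes and more paths.
-/

open scoped Classical

namespace Episode

variable {α : Type*}

theorem transClosed_iff_isTrans (G : Episode α) : G.TransClosed ↔ IsTrans ℕ G.edge :=
  ⟨fun h => ⟨fun _ _ _ hab hbc => h (.tail (.single hab) hbc)⟩,
    fun _ _ _ h => by rwa [Relation.transGen_eq_self] at h⟩

theorem Acyclic.ne_of_edge {G : Episode α} (hG : G.Acyclic) {u v : ℕ} (h : G.edge u v) :
    u ≠ v := by
  rintro rfl
  exact hG u (.single h)

theorem edge_of_addEdge_edge {G : Episode α} {e : ℕ × ℕ} {u v : ℕ}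
    (h : (G.addEdge e).edge u v) (hne : (u, v) ≠ e) : G.edge u v :=
  h.resolve_right hne

theorem addEdge_nodes_of_mem {G : Episode α} {x y : ℕ} (hx : x ∈ G.nodes) (hy : y ∈ G.nodes) :
    (G.addEdge (x, y)).nodes = G.nodes := by
  simp [addEdge, hx, hy]

theorem Strict.addEdge {G : Episode α} (hG : G.Strict) {x y : ℕ} (hx : x ∈ G.nodes)
    (hy : y ∈ G.nodes) : (G.addEdge (x, y)).Strict := by
  have hmono : Relation.TransGen G.edge ≤ Relation.TransGen (G.addEdge (x, y)).edge :=
    Relation.TransGen.mono fun _ _ => Or.inl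
  intro u hu v hv hne hlab
  rw [addEdge_nodes_of_mem hx hy] at hu hv
  exact (hG u hu v hv hne hlab).imp (hmono _ _) (hmono _ _)

theorem edge_of_child_of_isTrans_addEdge {G : Episode α} (hG : G.Acyclic) {x y c : ℕ}
    [IsTrans ℕ (G.addEdge (x, y)).edge] (hc : G.edge y c) : G.edge x c :=
  edge_of_addEdge_edge (e := (x, y)) (_root_.trans (Or.inr rfl) (Or.inl hc))
    fun h => hG.ne_of_edge hc (Prod.mk.inj h).2.symm

theorem edge_of_parent_of_isTrans_addEdge {G : Episode α} (hG : G.Acyclic) {x y p : ℕ}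
    [IsTrans ℕ (G.addEdge (x, y)).edge] (hp : G.edge p x) : G.edge p y :=
  edge_of_addEdge_edge (e := (x, y)) (_root_.trans (Or.inl hp) (Or.inr rfl))
    fun h => hG.ne_of_edge hp (Prod.mk.inj h).1

theorem isTrans_addEdge {G : Episode α} [IsTrans ℕ G.edge] {x y : ℕ} (hxy : x ≠ y)
    (hchild : ∀ c, G.edge y c → G.edge x c) (hpar : ∀ p, G.edge p x → G.edge p y) :
    IsTrans ℕ (G.addEdge (x, y)).edge := by
  constructor
  rintro a b c (hab | hab) (hbc | hbc)
  · exact Or.inl (_root_.trans hab hbc)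
  · obtain ⟨rfl, rfl⟩ := Prod.mk.inj hbc
    exact Or.inl (hpar a hab)
  · obtain ⟨rfl, rfl⟩ := Prod.mk.inj hab
    exact Or.inl (hchild c hbc)
  · obtain ⟨-, rfl⟩ := Prod.mk.inj hab
    exact absurd (Prod.mk.inj hbc).1 hxy.symm

end Episode

open Episode in
theorem stmt11_general {α : Type*} (G : Episode α) (hG : inS G) (x y : ℕ)
    (hx : x ∈ G.nodes) (hy : y ∈ G.nodes)
    (hdag : (G.addEdge (x, y)).Acyclic) :
    inS (G.addEdge (x, y)) ↔
      ((∀ c, G.edge y c → G.edge x c) ∧ ∀ p, G.edge p x → G.edge p y) := by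
  obtain ⟨hacyc, htrans, hstrict⟩ := hG
  rw [transClosed_iff_isTrans] at htrans
  constructor
  · rintro ⟨-, hT, -⟩
    rw [transClosed_iff_isTrans] at hT
    exact ⟨fun c => edge_of_child_of_isTrans_addEdge hacyc,
      fun p => edge_of_parent_of_isTrans_addEdge hacyc⟩
  · rintro ⟨hchild, hpar⟩
    have hxy : x ≠ y := hdag.ne_of_edge (Or.inr rfl)
    have := isTrans_addEdge hxy hchild hpar
    exact ⟨hdag, (transClosed_iff_isTrans _).mpr this, hstrict.addEdge hx hy⟩

open Episode in
/-- Let `G ∈ 𝒮`, let `e = (x,y)` be an edge not in `E(G)` and let `H = G + e`.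
If `H` is a DAG, then `H ∈ 𝒮` (in particular transitively closed) iff there is
an edge in `G` from `x` to every child of `y` and from every parent of `x` to
`y`. -/
theorem stmt11 {α : Type*} (G : Episode α) (hG : inS G) (x y : ℕ)
    (hx : x ∈ G.nodes) (hy : y ∈ G.nodes) (he : ¬ G.edge x y)
    (hdag : (G.addEdge (x, y)).Acyclic) :
    inS (G.addEdge (x, y)) ↔
      ((∀ c, G.edge y c → G.edge x c) ∧ ∀ p, G.edge p x → G.edge p y) :=
  stmt11_general G hG x y hx hy hdag
end

section
/- Let H be a strict, transitively closed episode with N + 1 edges that has at least one proper skeleton edge. Then either (Case A) there exist strict transitively closed episodes G_1 and G_2 with nodes identical to those of H such that G_1 and G_2 share N − 1 edges, e_1 = last(G_1) is not an edge of G_2, and the unique edge e_2 ∈ E(G_2) ∖ E(G_1) satisfies e_2 > e_1 and H = G_1 + e_2; or (Case B) for the episode G = H − last(H) (which is strict and transitively closed), last(G) is no longer a skeleton edge in H. -/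
open scoped Classical

/-!
Let `e₂ = last(H)` and `G = H − e₂`, which lies in `𝒮`. If `G` has a last proper
skeleton edge `e₁` that is still a skeleton edge of `H`, then `G₁ = G` and
`G₂ = H − e₁` witness Case A: both lie in `𝒮`, they share the `N − 1` edges of `H`
other than `e₁, e₂`, and `e₁ < e₂` because `e₁` is a proper skeleton edge of `H`
and `e₂` is the last one. Otherwise Case B holds for `e₂`.
-/

namespace Set

variable {β : Type*} {s : Set β} {a b : β}

theorem ncard_sdiff_singleton_inter_sdiff_singleton (ha : a ∈ s) (hb : b ∈ s) (hab : a ≠ b) :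
    ((s \ {b}) ∩ (s \ {a})).ncard = s.ncard - 2 := by
  have hinter : (s \ {b}) ∩ (s \ {a}) = s \ {a, b} := by
    ext p
    simp only [mem_inter_iff, mem_sdiff, mem_singleton_iff, mem_insert_iff]
    tauto
  rw [hinter, ncard_sdiff (insert_subset ha (singleton_subset_iff.mpr hb)), ncard_pair hab]

theorem sdiff_singleton_sdiff_sdiff_singleton (hb : b ∈ s) (hab : a ≠ b) :
    (s \ {a}) \ (s \ {b}) = {b} := by
  ext p
  simp only [mem_sdiff, mem_singleton_iff]
  constructor
  · rintro ⟨⟨hp, -⟩, hp'⟩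
    by_contra hpb
    exact hp' ⟨hp, hpb⟩
  · rintro rfl
    exact ⟨⟨hb, hab.symm⟩, fun h => h.2 rfl⟩

theorem sdiff_singleton_union_singleton (hb : b ∈ s) : s \ {b} ∪ {b} = s := by
  rw [union_singleton, insert_sdiff_singleton, insert_eq_of_mem hb]

end Set

namespace Episode

variable {α : Type*}

theorem edgeLT_iff_toLex_lt {e f : ℕ × ℕ} : edgeLT e f ↔ toLex e < toLex f :=
  Prod.Lex.lt_iff.symm

theorem edgeSet_eraseEdge (G : Episode α) (e : ℕ × ℕ) :
    edgeSet (G.eraseEdge e) = edgeSet G \ {e} := by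
  ext ⟨x, y⟩
  simp [edgeSet, eraseEdge]

theorem IsProperSkeletonEdge.mem_edgeSet {G : Episode α} {e : ℕ × ℕ}
    (he : IsProperSkeletonEdge G e) : e ∈ edgeSet G :=
  he.1.1

theorem transGen_of_transGen_eraseEdge {G : Episode α} {e : ℕ × ℕ} {u v : ℕ}
    (h : Relation.TransGen (G.eraseEdge e).edge u v) : Relation.TransGen G.edge u v :=
  Relation.TransGen.mono (fun _ _ h => h.1) _ _ h

/-- A path of length at least two from `e.1` to `e.2` would give a two-step path, by
transitivity. -/
theorem TransClosed.transGen_eraseEdge {G : Episode α} (htc : G.TransClosed)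
    {e : ℕ × ℕ} (he : IsSkeletonEdge G e) {u v : ℕ}
    (h : Relation.TransGen (G.eraseEdge e).edge u v) : (G.eraseEdge e).edge u v := by
  refine ⟨htc (transGen_of_transGen_eraseEdge h), fun huv => ?_⟩
  subst huv
  obtain ⟨w, hpath, hwv⟩ := Relation.TransGen.tail'_iff.mp h
  rcases Relation.reflTransGen_iff_eq_or_transGen.mp hpath with rfl | hpath
  · exact hwv.2 rfl
  · exact he.2 ⟨w, htc (transGen_of_transGen_eraseEdge hpath), hwv.1⟩

theorem inS_eraseEdge {G : Episode α} (hG : inS G) {e : ℕ × ℕ}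
    (he : IsProperSkeletonEdge G e) : inS (G.eraseEdge e) := by
  obtain ⟨hac, htc, hst⟩ := hG
  have hnot_e : ∀ {u v}, G.edge u v → G.lab u = G.lab v → (G.eraseEdge e).edge u v :=
    fun huv hl => ⟨huv, fun h => he.2 (by rwa [← h])⟩
  refine ⟨fun v hv => hac v (transGen_of_transGen_eraseEdge hv),
    fun u v => htc.transGen_eraseEdge he.1, fun u hu v hv hne hl => ?_⟩
  rcases hst u hu v hv hne hl with h | h
  · exact Or.inl (.single (hnot_e (htc h) hl))
  · exact Or.inr (.single (hnot_e (htc h) hl.symm))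

theorem exists_isLastEdge {G : Episode α} (hfin : (edgeSet G).Finite)
    (hne : ∃ e, IsProperSkeletonEdge G e) : ∃ e, IsLastEdge G e := by
  have hfin' : {e | IsProperSkeletonEdge G e}.Finite :=
    hfin.subset fun _ he => IsProperSkeletonEdge.mem_edgeSet he
  obtain ⟨e, he, hmax⟩ := hfin'.exists_maximalFor toLex _ hne
  refine ⟨e, he, fun f hf => ?_⟩
  rcases lt_trichotomy (toLex f) (toLex e) with hlt | heq | hgt
  · exact Or.inr (edgeLT_iff_toLex_lt.mpr hlt)
  · exact Or.inl (toLex.injective heq)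
  · exact absurd (hmax hf hgt.le) hgt.not_ge

theorem caseA_of_isLastEdge_eraseEdge [LinearOrder α] {H : Episode α} (hH : inS H)
    {e₁ e₂ : ℕ × ℕ} (he₂ : IsLastEdge H e₂)
    (he₁ : IsLastEdge (H.eraseEdge e₂) e₁) (hsk : IsSkeletonEdge H e₁) :
    inS (H.eraseEdge e₂) ∧ inS (H.eraseEdge e₁) ∧
      (edgeSet (H.eraseEdge e₂) ∩ edgeSet (H.eraseEdge e₁)).ncard = (edgeSet H).ncard - 2 ∧
      e₁ ∉ edgeSet (H.eraseEdge e₁) ∧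
      edgeSet (H.eraseEdge e₁) \ edgeSet (H.eraseEdge e₂) = {e₂} ∧ edgeLT e₁ e₂ ∧
      edgeSet H = edgeSet (H.eraseEdge e₂) ∪ {e₂} := by
  have he₁' : IsProperSkeletonEdge H e₁ := ⟨hsk, he₁.1.2⟩
  have he₁H : e₁ ∈ edgeSet H := he₁'.mem_edgeSet
  have he₂H : e₂ ∈ edgeSet H := he₂.1.mem_edgeSet
  have hne : e₁ ≠ e₂ := he₁.1.1.1.2
  simp only [edgeSet_eraseEdge]
  exact ⟨inS_eraseEdge hH he₂.1, inS_eraseEdge hH he₁',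
    Set.ncard_sdiff_singleton_inter_sdiff_singleton he₁H he₂H hne, fun h => h.2 rfl,
    Set.sdiff_singleton_sdiff_sdiff_singleton he₂H hne, (he₂.2 e₁ he₁').resolve_left hne,
    (Set.sdiff_singleton_union_singleton he₂H).symm⟩

end Episode

open Episode in
theorem stmt12_general {α : Type*} [LinearOrder α] (H : Episode α) (hH : inS H)
    (N : ℕ)
    (hcard : (edgeSet H).ncard = N + 1)
    (hskel : ∃ e, IsProperSkeletonEdge H e) :
    (∃ G₁ G₂ : Episode α, inS G₁ ∧ inS G₂ ∧
      G₁.nodes = H.nodes ∧ G₂.nodes = H.nodes ∧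
      (∀ v ∈ H.nodes, G₁.lab v = H.lab v) ∧
      (∀ v ∈ H.nodes, G₂.lab v = H.lab v) ∧
      (edgeSet G₁ ∩ edgeSet G₂).ncard = N - 1 ∧
      ∃ e₁ e₂ : ℕ × ℕ, IsLastEdge G₁ e₁ ∧ e₁ ∉ edgeSet G₂ ∧
        edgeSet G₂ \ edgeSet G₁ = {e₂} ∧ edgeLT e₁ e₂ ∧
        edgeSet H = edgeSet G₁ ∪ {e₂}) ∨
    (∃ e, IsLastEdge H e ∧ inS (H.eraseEdge e) ∧
      ∀ e', IsLastEdge (H.eraseEdge e) e' → ¬ IsSkeletonEdge H e') := by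
  have hfin : (edgeSet H).Finite := Set.finite_of_ncard_ne_zero (by omega)
  obtain ⟨e₂, he₂⟩ := exists_isLastEdge hfin hskel
  by_cases hA : ∃ e₁, IsLastEdge (H.eraseEdge e₂) e₁ ∧ IsSkeletonEdge H e₁
  · obtain ⟨e₁, he₁, hsk⟩ := hA
    obtain ⟨hG₁, hG₂, hinter, he₁G₂, hdiff, hlt, hH₁⟩ :=
      caseA_of_isLastEdge_eraseEdge hH he₂ he₁ hsk
    refine Or.inl ⟨_, _, hG₁, hG₂, rfl, rfl, fun _ _ => rfl, fun _ _ => rfl, ?_,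
      e₁, e₂, he₁, he₁G₂, hdiff, hlt, hH₁⟩
    rw [hinter, hcard]
    rfl
  · exact Or.inr ⟨e₂, he₂, inS_eraseEdge hH he₂.1, fun e₁ he₁ hsk => hA ⟨e₁, he₁, hsk⟩⟩

open Episode in
/-- Candidate generation: a strict transitively closed episode `H` with `N+1`
edges that has a proper skeleton edge arises either (Case A) as `H = G₁ + e₂`
from two episodes `G₁, G₂ ∈ 𝒮` with nodes identical to `H` sharing `N − 1`
edges, with `e₁ = last(G₁) ∉ E(G₂)` and `e₂` the unique edge of
`E(G₂) ∖ E(G₁)` satisfying `e₂ > e₁`, or (Case B) for `G = H − last(H)`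
(which lies in `𝒮`), `last(G)` is no longer a skeleton edge in `H`. -/
theorem stmt12 {α : Type*} [LinearOrder α] (H : Episode α) (hH : inS H)
    (hci : CanonicallyIndexed H) (N : ℕ)
    (hcard : (edgeSet H).ncard = N + 1)
    (hskel : ∃ e, IsProperSkeletonEdge H e) :
    (∃ G₁ G₂ : Episode α, inS G₁ ∧ inS G₂ ∧
      G₁.nodes = H.nodes ∧ G₂.nodes = H.nodes ∧
      (∀ v ∈ H.nodes, G₁.lab v = H.lab v) ∧
      (∀ v ∈ H.nodes, G₂.lab v = H.lab v) ∧
      (edgeSet G₁ ∩ edgeSet G₂).ncard = N - 1 ∧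
      ∃ e₁ e₂ : ℕ × ℕ, IsLastEdge G₁ e₁ ∧ e₁ ∉ edgeSet G₂ ∧
        edgeSet G₂ \ edgeSet G₁ = {e₂} ∧ edgeLT e₁ e₂ ∧
        edgeSet H = edgeSet G₁ ∪ {e₂}) ∨
    (∃ e, IsLastEdge H e ∧ inS (H.eraseEdge e) ∧
      ∀ e', IsLastEdge (H.eraseEdge e) e' → ¬ IsSkeletonEdge H e') :=
  stmt12_general H hH N hcard hskel
end

section
/- Let G be a strict, transitively closed episode, let e_1 = (x_1, y_1) be a skeleton edge of G, let e_2 = (x_2, y_2) be an edge not in E(G), and define H = G + e_2. Assume H is strict and transitively closed and that e_1 is not a skeleton edge in H. Then either y_2 = y_1 and (x_1, x_2) is a skeleton edge in G, or x_1 = x_2 and (y_2, y_1) is a skeleton edge in G. -/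
open scoped Classical

/-! A new edge `e` can only destroy the skeleton edge `(x₁, y₁)` by becoming one half of a
two-step path `x₁ → u → y₁` whose other half lies in `G`, so `e` shares an endpoint with
`(x₁, y₁)`. The remaining half is again a skeleton edge of `G`: a detour around it, followed
by `e` and closed transitively in `G + e`, would give a detour around `(x₁, y₁)` in `G`,
unless it runs through the shared endpoint itself, which acyclicity of `G + e` forbids. -/

namespace Episode

variable {α : Type*} {G : Episode α} {e : ℕ × ℕ} {a b w : ℕ}

theorem Acyclic.not_edge_self (hG : G.Acyclic) (v : ℕ) : ¬ G.edge v v :=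
  fun h => hG v (.single h)

theorem edge_addEdge_of_edge {x y : ℕ} (h : G.edge x y) : (G.addEdge e).edge x y :=
  Or.inl h

theorem TransClosed.edge_snd_of_edge_fst_of_addEdge (hH : (G.addEdge e).TransClosed)
    (h : G.edge w e.1) : G.edge w e.2 ∨ w = e.1 := by
  rcases hH (.tail (.single (edge_addEdge_of_edge h)) (Or.inr rfl)) with h' | h'
  · exact Or.inl h'
  · exact Or.inr (Prod.ext_iff.1 h').1

theorem TransClosed.edge_fst_of_edge_snd_of_addEdge (hH : (G.addEdge e).TransClosed)
    (h : G.edge e.2 w) : G.edge e.1 w ∨ w = e.2 := by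
  rcases hH (.head (Or.inr rfl) (.single (edge_addEdge_of_edge h))) with h' | h'
  · exact Or.inl h'
  · exact Or.inr (Prod.ext_iff.1 h').2

theorem IsSkeletonEdge.eq_snd_or_eq_fst_of_not_addEdge (h : G.IsSkeletonEdge (a, b))
    (hns : ¬ (G.addEdge e).IsSkeletonEdge (a, b)) :
    (e.2 = b ∧ G.edge a e.1) ∨ (e.1 = a ∧ G.edge e.2 b) := by
  obtain ⟨u, hau, hub⟩ : ∃ u, (G.addEdge e).edge a u ∧ (G.addEdge e).edge u b := by
    by_contra hu
    exact hns ⟨edge_addEdge_of_edge h.1, hu⟩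
  obtain ⟨x, y⟩ := e
  rcases hau with hau | hau <;> rcases hub with hub | hub
  · exact absurd ⟨u, hau, hub⟩ h.2
  · obtain ⟨rfl, rfl⟩ := Prod.mk.inj hub
    exact Or.inl ⟨rfl, hau⟩
  · obtain ⟨rfl, rfl⟩ := Prod.mk.inj hau
    exact Or.inr ⟨rfl, hub⟩
  · -- both halves are the new edge, so `e = (a, a)` and `G.edge a a` is `h.1`
    obtain ⟨rfl, rfl⟩ := Prod.mk.inj hau
    obtain ⟨rfl, rfl⟩ := Prod.mk.inj hub
    exact Or.inl ⟨rfl, h.1⟩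

theorem IsSkeletonEdge.of_addEdge_snd (hHa : (G.addEdge e).Acyclic)
    (hHt : (G.addEdge e).TransClosed) (h : G.IsSkeletonEdge (a, e.2)) (hae : G.edge a e.1) :
    G.IsSkeletonEdge (a, e.1) := by
  refine ⟨hae, fun ⟨w, haw, hwe⟩ => ?_⟩
  rcases hHt.edge_snd_of_edge_fst_of_addEdge hwe with hwb | rfl
  · exact h.2 ⟨w, haw, hwb⟩
  · exact hHa.not_edge_self _ (edge_addEdge_of_edge hwe)

theorem IsSkeletonEdge.of_addEdge_fst (hHa : (G.addEdge e).Acyclic)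
    (hHt : (G.addEdge e).TransClosed) (h : G.IsSkeletonEdge (e.1, b)) (heb : G.edge e.2 b) :
    G.IsSkeletonEdge (e.2, b) := by
  refine ⟨heb, fun ⟨w, hew, hwb⟩ => ?_⟩
  rcases hHt.edge_fst_of_edge_snd_of_addEdge hew with haw | rfl
  · exact h.2 ⟨w, haw, hwb⟩
  · exact hHa.not_edge_self _ (edge_addEdge_of_edge hew)

end Episode

open Episode in
theorem stmt14_general {α : Type*} (G : Episode α) (x₁ y₁ x₂ y₂ : ℕ)
    (h₁ : IsSkeletonEdge G (x₁, y₁))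
    (hH : inS (G.addEdge (x₂, y₂)))
    (hns : ¬ IsSkeletonEdge (G.addEdge (x₂, y₂)) (x₁, y₁)) :
    (y₂ = y₁ ∧ IsSkeletonEdge G (x₁, x₂)) ∨
    (x₁ = x₂ ∧ IsSkeletonEdge G (y₂, y₁)) := by
  obtain ⟨hHa, hHt, -⟩ := hH
  rcases h₁.eq_snd_or_eq_fst_of_not_addEdge hns with ⟨rfl, hx⟩ | ⟨rfl, hy⟩
  · exact Or.inl ⟨rfl, h₁.of_addEdge_snd hHa hHt hx⟩
  · exact Or.inr ⟨rfl, h₁.of_addEdge_fst hHa hHt hy⟩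

open Episode in
/-- Let `G ∈ 𝒮`, let `e₁ = (x₁,y₁)` be a skeleton edge of `G` and
`e₂ = (x₂,y₂)` an edge not in `E(G)`, and let `H = G + e₂`.  If `H ∈ 𝒮` and
`e₁` is not a skeleton edge of `H`, then either `y₂ = y₁` and `(x₁,x₂)` is a
skeleton edge of `G`, or `x₁ = x₂` and `(y₂,y₁)` is a skeleton edge of `G`. -/
theorem stmt14 {α : Type*} (G : Episode α) (hG : inS G) (x₁ y₁ x₂ y₂ : ℕ)
    (h₁ : IsSkeletonEdge G (x₁, y₁))
    (hx₂ : x₂ ∈ G.nodes) (hy₂ : y₂ ∈ G.nodes) (h₂ : ¬ G.edge x₂ y₂)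
    (hH : inS (G.addEdge (x₂, y₂)))
    (hns : ¬ IsSkeletonEdge (G.addEdge (x₂, y₂)) (x₁, y₁)) :
    (y₂ = y₁ ∧ IsSkeletonEdge G (x₁, x₂)) ∨
    (x₁ = x₂ ∧ IsSkeletonEdge G (y₂, y₁)) :=
  stmt14_general G x₁ y₁ x₂ y₂ h₁ hH hns
end
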